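/- (Multivariate Weierstrass preparation, commutative power series case.) Let k be a finite field, R = k[[x_1, …, x_n]], and let ⪯ be an additive total order on ℕⁿ. Let 0 ≠ f ∈ R. Then there exist unique elements u ∈ R^× (a unit) and F ∈ R such that: (i) f = uF; (ii) the coefficient of F at LM(f) equals 1; and (iii) supp(F) ∩ (LM(f) + ℕⁿ) = {LM(f)}. In particular, LM(F) = LM(f). -/

import Mathlib

/-!
Put `μ = LM(f)` and `w = u⁻¹`. Conditions (ii) and (iii) on `F = w f` say exactly that
`coeff (μ + γ) (w f) = δ_{γ,0}` for all `γ`. Every exponent of `f` is `⪰ μ`, so by additivity the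
coefficient of `w f` at `μ + γ` is `w_γ f_μ` plus terms involving only coefficients `w_a` with
`a ≺ γ`. By Dickson's lemma `≺` is well-founded, so this triangular system has exactly one
solution `w`, obtained by well-founded recursion; at `γ = 0` it reads `w_0 f_μ = 1`, so `w` is a
unit.
-/

/-- The support of a multivariate power series: the set of exponents with nonzero
coefficient. -/
def psupp {n : ℕ} {k : Type*} [Semiring k] (f : MvPowerSeries (Fin n) k) :
    Set (Fin n →₀ ℕ) :=
  {α | MvPowerSeries.coeff α f ≠ 0}

/-- `IsLM le f μ` says that `μ` is the least monomial `LM(f)` of `f` with respect to the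
order `le`: `μ` lies in the support of `f` and is `le`-smaller than every element of the
support.  (In particular this forces `f ≠ 0`.) -/
def IsLM {n : ℕ} {k : Type*} [Semiring k] (le : (Fin n →₀ ℕ) → (Fin n →₀ ℕ) → Prop)
    (f : MvPowerSeries (Fin n) k) (μ : Fin n →₀ ℕ) : Prop :=
  μ ∈ psupp f ∧ ∀ ν ∈ psupp f, le μ ν

/-- `le` is an additive total order on `ℕⁿ`: a total order such that `0 ⪯ α` for all `α`,
and `α ⪯ β` implies `α + γ ⪯ β + γ`.  (Every such order is a well-order.) -/
structure IsAdditiveTotalOrder {n : ℕ} (le : (Fin n →₀ ℕ) → (Fin n →₀ ℕ) → Prop) : Prop where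
  total : ∀ α β, le α β ∨ le β α
  antisymm : ∀ α β, le α β → le β α → α = β
  trans : ∀ α β γ, le α β → le β γ → le α γ
  zero_le : ∀ α, le 0 α
  add_right : ∀ α β γ, le α β → le (α + γ) (β + γ)

/-- Membership in `Δ_{F,r} = (LM(f_r) + ℕⁿ) ∖ ⋃_{i<r} Δ_{F,i}`, where `μ i = LM(f_i)`.
(Unwinding the recursion, `Δ_{F,r} = (μ r + ℕⁿ) ∖ ⋃_{i<r} (μ i + ℕⁿ)`.) -/
def InDelta {n s : ℕ} (μ : Fin s → (Fin n →₀ ℕ)) (r : Fin s) (β : Fin n →₀ ℕ) : Prop :=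
  (∃ γ, β = μ r + γ) ∧ ∀ i : Fin s, i < r → ¬ ∃ γ, β = μ i + γ

/-- Membership in `Δ̄_F = ℕⁿ ∖ ⋃_{i=1}^s Δ_{F,i} = ℕⁿ ∖ ⋃_{i=1}^s (μ i + ℕⁿ)`. -/
def InDeltaBar {n s : ℕ} (μ : Fin s → (Fin n →₀ ℕ)) (β : Fin n →₀ ℕ) : Prop :=
  ∀ i : Fin s, ¬ ∃ γ, β = μ i + γ

def StrictPart {α : Type*} (le : α → α → Prop) (a b : α) : Prop :=
  le a b ∧ ¬ le b a

namespace IsAdditiveTotalOrder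

variable {n : ℕ} {le : (Fin n →₀ ℕ) → (Fin n →₀ ℕ) → Prop}

theorem refl (hle : IsAdditiveTotalOrder le) (a : Fin n →₀ ℕ) : le a a :=
  (hle.total a a).elim id id

theorem le_add_right (hle : IsAdditiveTotalOrder le) (a c : Fin n →₀ ℕ) : le a (a + c) := by
  simpa [add_comm] using hle.add_right 0 c a (hle.zero_le c)

theorem le_of_add_le_add_right (hle : IsAdditiveTotalOrder le) {a b c : Fin n →₀ ℕ}
    (h : le (a + c) (b + c)) : le a b :=
  (hle.total a b).elim id fun hba =>
    add_right_cancel (hle.antisymm _ _ h (hle.add_right _ _ c hba)) ▸ hle.refl a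

theorem wellFounded_strictPart (hle : IsAdditiveTotalOrder le) : WellFounded (StrictPart le) := by
  have : IsPreorder _ le := { refl := hle.refl, trans := hle.trans }
  refine WellQuasiOrdered.wellFounded fun g => ?_
  obtain ⟨m, N, hmN, hg⟩ := wellQuasiOrdered_le g
  obtain ⟨c, hc⟩ := le_iff_exists_add.mp hg
  exact ⟨m, N, hmN, hc ▸ hle.le_add_right _ _⟩

theorem strictPart_of_add_eq (hle : IsAdditiveTotalOrder le) {μ a b γ : Fin n →₀ ℕ}
    (hb : le μ b) (h : a + b = μ + γ) (ha : a ≠ γ) : StrictPart le a γ := by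
  have hle' : le a γ := by
    refine hle.le_of_add_le_add_right (c := μ) ?_
    rw [add_comm γ, ← h]
    simpa only [add_comm] using hle.add_right _ _ a hb
  exact ⟨hle', fun h' => ha (hle.antisymm _ _ hle' h')⟩

end IsAdditiveTotalOrder

theorem WellFounded.existsUnique_isFixedPt {α β : Type*} [Nonempty β] {r : α → α → Prop}
    (hr : WellFounded r) (G : (α → β) → α → β)
    (hG : ∀ g₁ g₂ x, (∀ y, r y x → g₁ y = g₂ y) → G g₁ x = G g₂ x) :
    ∃! g, Function.IsFixedPt G g := by
  classical
  set g := hr.fix fun x ih => G (fun y => if h : r y x then ih y h else Classical.arbitrary β) x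
  have hg : Function.IsFixedPt G g := funext fun x => by
    rw [show g x = _ from hr.fix_eq _ x]
    exact hG _ _ x fun y hy => by rw [dif_pos hy]
  refine ⟨g, hg, fun g' hg' => funext fun x => ?_⟩
  induction x using hr.induction with
  | _ x ih => rw [← hg', ← hg]; exact hG _ _ x ih

open Finset.HasAntidiagonal

namespace MvPowerSeries

variable {σ R : Type*} [DecidableEq σ] [Semiring R]

noncomputable def coeffMulRest (φ ψ : MvPowerSeries σ R) (μ γ : σ →₀ ℕ) : R :=
  ∑ p ∈ (antidiagonal (μ + γ)).erase (γ, μ), coeff p.1 φ * coeff p.2 ψ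

theorem coeff_add_mul (φ ψ : MvPowerSeries σ R) (μ γ : σ →₀ ℕ) :
    coeff (μ + γ) (φ * ψ) = coeff γ φ * coeff μ ψ + coeffMulRest φ ψ μ γ := by
  rw [coeff_mul, coeffMulRest,
    ← Finset.add_sum_erase _ _ (mem_antidiagonal (a := (γ, μ)).2 (add_comm γ μ))]

section Preparation

variable {n : ℕ} {k : Type*} {le : (Fin n →₀ ℕ) → (Fin n →₀ ℕ) → Prop}

theorem coeffMulRest_congr [Semiring k] (hle : IsAdditiveTotalOrder le)
    {f : MvPowerSeries (Fin n) k} {μ : Fin n →₀ ℕ} (hμ : IsLM le f μ)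
    {w₁ w₂ : MvPowerSeries (Fin n) k} {γ : Fin n →₀ ℕ}
    (h : ∀ a, StrictPart le a γ → coeff a w₁ = coeff a w₂) :
    coeffMulRest w₁ f μ γ = coeffMulRest w₂ f μ γ := by
  refine Finset.sum_congr rfl fun p hp => ?_
  obtain ⟨hne, hp⟩ := Finset.mem_erase.1 hp
  rw [mem_antidiagonal] at hp
  by_cases hf : coeff p.2 f = 0
  · simp [hf]
  have hγ : p.1 ≠ γ := by
    rintro rfl
    exact hne (Prod.ext rfl (add_left_cancel (hp.trans (add_comm μ p.1))))
  rw [h p.1 (hle.strictPart_of_add_eq (hμ.2 _ hf) hp hγ)]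

theorem coeffMulRest_zero [Semiring k] (hle : IsAdditiveTotalOrder le)
    {f : MvPowerSeries (Fin n) k} {μ : Fin n →₀ ℕ} (hμ : IsLM le f μ)
    (w : MvPowerSeries (Fin n) k) : coeffMulRest w f μ 0 = 0 := by
  rw [coeffMulRest_congr hle hμ (w₂ := 0) fun a ha => (ha.2 (hle.zero_le a)).elim]
  simp [coeffMulRest]

theorem coeff_add_eq_ite_iff [Semiring k] [Nontrivial k] {F : MvPowerSeries (Fin n) k}
    {μ : Fin n →₀ ℕ} :
    (∀ γ, coeff (μ + γ) F = if γ = 0 then 1 else 0) ↔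
      coeff μ F = 1 ∧ psupp F ∩ {β | ∃ γ, β = μ + γ} = {μ} := by
  constructor
  · intro h
    have h0 : coeff μ F = 1 := by simpa using h 0
    refine ⟨h0, Set.ext fun β => ⟨?_, ?_⟩⟩
    · rintro ⟨hβ, γ, rfl⟩
      by_contra hγ
      exact hβ ((h γ).trans (if_neg fun h' => hγ (by simp [h'])))
    · rintro rfl
      exact ⟨by simp [psupp, h0], 0, (add_zero _).symm⟩
  · rintro ⟨h0, hsupp⟩ γ
    split_ifs with hγ
    · rwa [hγ, add_zero]
    by_contra hne
    have hmem : μ + γ ∈ psupp F ∩ {β | ∃ γ, β = μ + γ} := ⟨hne, γ, rfl⟩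
    rw [hsupp, Set.mem_singleton_iff, add_eq_left] at hmem
    exact hγ hmem

theorem isLM_mul [Semiring k] (hle : IsAdditiveTotalOrder le) {f : MvPowerSeries (Fin n) k}
    {μ : Fin n →₀ ℕ} (hμ : IsLM le f μ) {w : MvPowerSeries (Fin n) k}
    (hwf : coeff μ (w * f) ≠ 0) : IsLM le (w * f) μ := by
  refine ⟨hwf, fun ν hν => ?_⟩
  classical
  obtain ⟨p, hp, hpν⟩ := Finset.exists_ne_zero_of_sum_ne_zero ((coeff_mul ..).symm.trans_ne hν)
  have hν' : ν = p.2 + p.1 := by rw [← mem_antidiagonal.1 hp, add_comm]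
  exact hle.trans _ _ _ (hμ.2 _ (right_ne_zero_of_mul hpν)) (hν' ▸ hle.le_add_right _ _)

variable [Field k]

noncomputable def preparationStep (f : MvPowerSeries (Fin n) k) (μ : Fin n →₀ ℕ)
    (w : MvPowerSeries (Fin n) k) : MvPowerSeries (Fin n) k :=
  fun γ => (coeff μ f)⁻¹ * ((if γ = 0 then 1 else 0) - coeffMulRest w f μ γ)

theorem isFixedPt_preparationStep_iff {f : MvPowerSeries (Fin n) k} {μ : Fin n →₀ ℕ}
    (hc : coeff μ f ≠ 0) {w : MvPowerSeries (Fin n) k} :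
    Function.IsFixedPt (preparationStep f μ) w ↔
      ∀ γ, coeff (μ + γ) (w * f) = if γ = 0 then 1 else 0 := by
  refine MvPowerSeries.ext_iff.trans (forall_congr' fun γ => ?_)
  rw [coeff_add_mul, eq_comm, ← eq_sub_iff_add_eq, mul_comm, ← eq_inv_mul_iff_mul_eq₀ hc]
  rfl

theorem existsUnique_coeff_add_mul_eq (hle : IsAdditiveTotalOrder le)
    {f : MvPowerSeries (Fin n) k} {μ : Fin n →₀ ℕ} (hμ : IsLM le f μ) :
    ∃! w : MvPowerSeries (Fin n) k, ∀ γ, coeff (μ + γ) (w * f) = if γ = 0 then 1 else 0 := by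
  have := hle.wellFounded_strictPart.existsUnique_isFixedPt (preparationStep f μ)
    fun w₁ w₂ γ h => by simp only [preparationStep, coeffMulRest_congr hle hμ h]
  exact (existsUnique_congr fun w => isFixedPt_preparationStep_iff hμ.1).1 this

theorem isUnit_of_coeff_add_mul_eq (hle : IsAdditiveTotalOrder le)
    {f : MvPowerSeries (Fin n) k} {μ : Fin n →₀ ℕ} (hμ : IsLM le f μ)
    {w : MvPowerSeries (Fin n) k} (hw : ∀ γ, coeff (μ + γ) (w * f) = if γ = 0 then 1 else 0) :
    IsUnit w := by
  have h0 := hw 0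
  rw [coeff_add_mul, coeffMulRest_zero hle hμ, add_zero, if_pos rfl] at h0
  rw [isUnit_iff_constantCoeff, ← coeff_zero_eq_constantCoeff_apply]
  exact (left_ne_zero_of_mul_eq_one h0).isUnit

end Preparation

end MvPowerSeries

theorem statement16_general
    {n : ℕ} {k : Type*} [Field k]
    (le : (Fin n →₀ ℕ) → (Fin n →₀ ℕ) → Prop) (hle : IsAdditiveTotalOrder le)
    (f : MvPowerSeries (Fin n) k)
    (lmf : Fin n →₀ ℕ) (hlmf : IsLM le f lmf) :
    ∃ (u : (MvPowerSeries (Fin n) k)ˣ) (F : MvPowerSeries (Fin n) k),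
      f = ↑u * F ∧
      MvPowerSeries.coeff lmf F = 1 ∧
      psupp F ∩ {β | ∃ γ, β = lmf + γ} = {lmf} ∧
      IsLM le F lmf ∧
      ∀ (u' : (MvPowerSeries (Fin n) k)ˣ) (F' : MvPowerSeries (Fin n) k),
        f = ↑u' * F' →
        MvPowerSeries.coeff lmf F' = 1 →
        psupp F' ∩ {β | ∃ γ, β = lmf + γ} = {lmf} →
        u' = u ∧ F' = F := by
  obtain ⟨w, hw, hw_unique⟩ := MvPowerSeries.existsUnique_coeff_add_mul_eq hle hlmf
  obtain ⟨v, rfl⟩ := MvPowerSeries.isUnit_of_coeff_add_mul_eq hle hlmf hw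
  obtain ⟨hF1, hFsupp⟩ := MvPowerSeries.coeff_add_eq_ite_iff.1 hw
  refine ⟨v⁻¹, v * f, by simp, hF1, hFsupp, MvPowerSeries.isLM_mul hle hlmf (by simp [hF1]), ?_⟩
  intro u' F' hf hF'1 hF'supp
  have hF' : ↑u'⁻¹ * f = F' := by rw [hf, Units.inv_mul_cancel_left]
  have hv : ↑u'⁻¹ = (v : MvPowerSeries (Fin n) k) :=
    hw_unique _ fun γ => hF' ▸ MvPowerSeries.coeff_add_eq_ite_iff.2 ⟨hF'1, hF'supp⟩ γ
  exact ⟨by rw [← inv_inv u', Units.ext hv], by rw [← hF', hv]⟩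

/-- multivariate Weierstrass preparation, commutative power series case.
Let `k` be a finite field, `R = k[[x_1, …, x_n]]`, `⪯` an additive total order on `ℕⁿ`.
Let `0 ≠ f ∈ R` with least monomial `LM(f) = lmf`.  Then there are unique `u ∈ Rˣ` and
`F ∈ R` such that (i) `f = u F`; (ii) the coefficient of `F` at `LM(f)` is `1`;
(iii) `supp(F) ∩ (LM(f) + ℕⁿ) = {LM(f)}`.  In particular `LM(F) = LM(f)`. -/
theorem statement16
    {n : ℕ} {k : Type*} [Field k] [Finite k]
    (le : (Fin n →₀ ℕ) → (Fin n →₀ ℕ) → Prop) (hle : IsAdditiveTotalOrder le)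
    (f : MvPowerSeries (Fin n) k) (hf : f ≠ 0)
    (lmf : Fin n →₀ ℕ) (hlmf : IsLM le f lmf) :
    ∃ (u : (MvPowerSeries (Fin n) k)ˣ) (F : MvPowerSeries (Fin n) k),
      f = ↑u * F ∧
      MvPowerSeries.coeff lmf F = 1 ∧
      psupp F ∩ {β | ∃ γ, β = lmf + γ} = {lmf} ∧
      IsLM le F lmf ∧
      ∀ (u' : (MvPowerSeries (Fin n) k)ˣ) (F' : MvPowerSeries (Fin n) k),
        f = ↑u' * F' →
        MvPowerSeries.coeff lmf F' = 1 →
        psupp F' ∩ {β | ∃ γ, β = lmf + γ} = {lmf} →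
        u' = u ∧ F' = F :=
  statement16_general le hle f lmf hlmf
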